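/- arXiv:2312.17299 — 5 statements merged into one kernel-verified Lean document; each statement's English description precedes it below -/
import Mathlib

section
/- Suppose that R is a ring, S ∈ Den_l(R, 0) and 𝔭 is a prime ideal of R. (1) If S⁻¹𝔭 ∩ R = 𝔭, then S⁻¹𝔭 is a prime ideal of S⁻¹R if and only if the left ideal S⁻¹𝔭 of S⁻¹R is a two-sided ideal. (2) If S⁻¹𝔭 ∩ R is a prime ideal of R, then S⁻¹𝔭 is a prime ideal of S⁻¹R if and only if the left ideal S⁻¹𝔭 of S⁻¹R is a two-sided ideal. -/
/- Common framework: two-sided ideals, prime ideals, denominator sets and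
   left localizations of (possibly noncommutative) rings, described
   axiomatically via their characteristic properties. -/

namespace BavulaMinPrimes

/-- A subset of a ring is a two-sided ideal. -/
def IsIdealSet {R : Type*} [Ring R] (I : Set R) : Prop :=
  (0 : R) ∈ I ∧ (∀ a ∈ I, ∀ b ∈ I, a + b ∈ I) ∧ (∀ a ∈ I, -a ∈ I) ∧
    ∀ a ∈ I, ∀ r : R, r * a ∈ I ∧ a * r ∈ I

/-- A (two-sided) prime ideal: a proper ideal `P` such that `A * B ⊆ P`
implies `A ⊆ P` or `B ⊆ P` for all ideals `A`, `B`. -/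
def IsPrimeIdealSet {R : Type*} [Ring R] (P : Set R) : Prop :=
  IsIdealSet P ∧ P ≠ Set.univ ∧
    ∀ A B : Set R, IsIdealSet A → IsIdealSet B →
      (∀ a ∈ A, ∀ b ∈ B, a * b ∈ P) → A ⊆ P ∨ B ⊆ P

/-- A completely prime ideal: the factor ring is a domain. -/
def IsCompletelyPrimeIdealSet {R : Type*} [Ring R] (P : Set R) : Prop :=
  IsIdealSet P ∧ P ≠ Set.univ ∧ ∀ a b : R, a * b ∈ P → a ∈ P ∨ b ∈ P

/-- A minimal prime ideal of a ring. -/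
def IsMinimalPrimeIdealSet {R : Type*} [Ring R] (P : Set R) : Prop :=
  IsPrimeIdealSet P ∧ ∀ P' : Set R, IsPrimeIdealSet P' → P' ⊆ P → P' = P

/-- A prime minimal over an ideal `A`. -/
def IsMinimalPrimeOver {R : Type*} [Ring R] (A P : Set R) : Prop :=
  IsPrimeIdealSet P ∧ A ⊆ P ∧
    ∀ P' : Set R, IsPrimeIdealSet P' → A ⊆ P' → P' ⊆ P → P' = P

/-- The set `min(R)` of minimal primes of `R`. -/
def minPrimes (R : Type*) [Ring R] : Set (Set R) := { P | IsMinimalPrimeIdealSet P }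

/-- The prime radical: intersection of all prime ideals. -/
def primeRadicalSet (R : Type*) [Ring R] : Set R :=
  { r : R | ∀ P : Set R, IsPrimeIdealSet P → r ∈ P }

/-- A ring is semiprime if its prime radical is zero. -/
def IsSemiprimeRing (R : Type*) [Ring R] : Prop := primeRadicalSet R = {0}

/-- A ring is prime if its zero ideal is a prime ideal. -/
def IsPrimeRing (R : Type*) [Ring R] : Prop := IsPrimeIdealSet ({0} : Set R)

/-- A multiplicative subset: `1 ∈ S`, `0 ∉ S`, closed under multiplication. -/
def IsMulSet {R : Type*} [Ring R] (S : Set R) : Prop :=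
  (1 : R) ∈ S ∧ (0 : R) ∉ S ∧ ∀ s ∈ S, ∀ t ∈ S, s * t ∈ S

/-- The left Ore condition: `S r ∩ R s ≠ ∅`. -/
def LeftOre {R : Type*} [Ring R] (S : Set R) : Prop :=
  ∀ r : R, ∀ s ∈ S, ∃ s' ∈ S, ∃ r' : R, s' * r = r' * s

/-- The right Ore condition: `r S ∩ s R ≠ ∅`. -/
def RightOre {R : Type*} [Ring R] (S : Set R) : Prop :=
  ∀ r : R, ∀ s ∈ S, ∃ s' ∈ S, ∃ r' : R, r * s' = s * r'

/-- A left denominator set: a left Ore multiplicative set such that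
`r s = 0` (with `s ∈ S`) implies `t r = 0` for some `t ∈ S`. -/
def IsLeftDenominatorSet {R : Type*} [Ring R] (S : Set R) : Prop :=
  IsMulSet S ∧ LeftOre S ∧ ∀ r : R, ∀ s ∈ S, r * s = 0 → ∃ t ∈ S, t * r = 0

/-- A right denominator set. -/
def IsRightDenominatorSet {R : Type*} [Ring R] (S : Set R) : Prop :=
  IsMulSet S ∧ RightOre S ∧ ∀ r : R, ∀ s ∈ S, s * r = 0 → ∃ t ∈ S, r * t = 0

/-- `ass_l(S) = { r | s r = 0 for some s ∈ S }`. -/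
def lAss {R : Type*} [Ring R] (S : Set R) : Set R := { r : R | ∃ s ∈ S, s * r = 0 }

/-- `f : R →+* Q` realizes `Q` as the left localization `S⁻¹R`:
elements of `S` become units, every element of `Q` is a left fraction
`(f s)⁻¹ (f r)`, and the kernel of `f` is `ass_l(S)`.  These properties
characterize `S⁻¹R` up to a unique `R`-isomorphism. -/
structure IsLeftLocalization {R Q : Type*} [Ring R] [Ring Q]
    (S : Set R) (f : R →+* Q) : Prop where
  isUnit : ∀ s ∈ S, IsUnit (f s)
  surj : ∀ q : Q, ∃ s ∈ S, ∃ r : R, f s * q = f r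
  ker : ∀ r : R, f r = 0 ↔ r ∈ lAss S

/-- `S⁻¹I = { s⁻¹ a | s ∈ S, a ∈ I }` as a subset of the localization `Q`:
`q ∈ S⁻¹I` iff `f s * q = f a` for some `s ∈ S`, `a ∈ I`. -/
def locSet {R Q : Type*} [Ring R] [Ring Q] (f : R →+* Q) (S : Set R)
    (I : Set R) : Set Q :=
  { q : Q | ∃ s ∈ S, ∃ a ∈ I, f s * q = f a }

/-- A normal element: `R n = n R`. -/
def IsNormalElement {R : Type*} [Ring R] (n : R) : Prop :=
  (∀ r : R, ∃ r' : R, r * n = n * r') ∧ ∀ r : R, ∃ r' : R, n * r = r' * n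

/-- A prime rich ring: every ideal contains a finite product of prime ideals
containing it (the empty product being the whole ring). -/
def IsPrimeRich (R : Type*) [Ring R] : Prop :=
  ∀ A : Set R, IsIdealSet A →
    ∃ (n : ℕ) (P : Fin n → Set R),
      (∀ i, IsPrimeIdealSet (P i) ∧ A ⊆ P i) ∧
      ∀ x : Fin n → R, (∀ i, x i ∈ P i) → (List.ofFn x).prod ∈ A

/-- An ideal which is finitely generated as a right `R`-module. -/
def IsFGRightIdeal {R : Type*} [Ring R] (I : Set R) : Prop :=
  ∃ (m : ℕ) (g : Fin m → R), (∀ i, g i ∈ I) ∧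
    ∀ x ∈ I, ∃ c : Fin m → R, x = ∑ i, g i * c i

theorem isIdealSet_preimage {R Q : Type*} [Ring R] [Ring Q] (f : R →+* Q) {A : Set Q}
    (hA : IsIdealSet A) : IsIdealSet (f ⁻¹' A) := by
  obtain ⟨h0, hadd, hneg, hmul⟩ := hA
  refine ⟨by simpa using h0, fun a ha b hb => ?_, fun a ha => ?_, fun a ha r => ?_⟩
  · simpa using hadd _ ha _ hb
  · simpa using hneg _ ha
  · simpa using hmul _ ha (f r)

theorem isPrimeIdealSet_of_preimage {R Q : Type*} [Ring R] [Ring Q] {f : R →+* Q}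
    {P : Set Q} (hP : IsIdealSet P) (hpre : IsPrimeIdealSet (f ⁻¹' P))
    (hsat : ∀ C : Set Q, IsIdealSet C → f ⁻¹' C ⊆ f ⁻¹' P → C ⊆ P) :
    IsPrimeIdealSet P := by
  obtain ⟨-, hne, hprime⟩ := hpre
  refine ⟨hP, fun h => hne (by rw [h, Set.preimage_univ]), fun A B hA hB hAB => ?_⟩
  have hpreAB : ∀ a ∈ f ⁻¹' A, ∀ b ∈ f ⁻¹' B, a * b ∈ f ⁻¹' P := fun a ha b hb => by
    simpa only [Set.mem_preimage, map_mul] using hAB _ ha _ hb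
  exact (hprime _ _ (isIdealSet_preimage f hA) (isIdealSet_preimage f hB) hpreAB).imp
    (hsat A hA) (hsat B hB)

/-- Write `f s * q = f r`: then `f r ∈ C`, so `f t * f r = f a` with `t ∈ S`, `a ∈ p`, and
`f (t * s) * q = f a`. -/
theorem subset_locSet_of_preimage_subset {R Q : Type*} [Ring R] [Ring Q] {S : Set R}
    (hS : IsMulSet S) {f : R →+* Q} (hf : IsLeftLocalization S f) {p : Set R}
    {C : Set Q} (hC : IsIdealSet C) (hsub : f ⁻¹' C ⊆ f ⁻¹' locSet f S p) :
    C ⊆ locSet f S p := by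
  intro q hq
  obtain ⟨s, hs, r, hr⟩ := hf.surj q
  obtain ⟨t, ht, a, ha, hta⟩ := hsub (show f r ∈ C from hr ▸ (hC.2.2.2 q hq (f s)).1)
  exact ⟨t * s, hS.2.2 t ht s hs, a, ha, by rw [map_mul, mul_assoc, hr, hta]⟩

theorem isPrimeIdealSet_locSet_iff {R Q : Type*} [Ring R] [Ring Q] {S : Set R}
    (hS : IsMulSet S) {f : R →+* Q} (hf : IsLeftLocalization S f) {p : Set R}
    (hpre : IsPrimeIdealSet (f ⁻¹' locSet f S p)) :
    IsPrimeIdealSet (locSet f S p) ↔ IsIdealSet (locSet f S p) :=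
  ⟨fun h => h.1, fun hI =>
    isPrimeIdealSet_of_preimage hI hpre fun _ hC => subset_locSet_of_preimage_subset hS hf hC⟩

theorem statement15_general {R Q : Type*} [Ring R] [Ring Q]
    {S : Set R} (hS : IsLeftDenominatorSet S)
    (f : R →+* Q) (hf : IsLeftLocalization S f)
    {p : Set R} (hp : IsPrimeIdealSet p) :
    (f ⁻¹' locSet f S p = p →
      (IsPrimeIdealSet (locSet f S p) ↔ IsIdealSet (locSet f S p))) ∧
    (IsPrimeIdealSet (f ⁻¹' locSet f S p) →
      (IsPrimeIdealSet (locSet f S p) ↔ IsIdealSet (locSet f S p))) :=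
  ⟨fun h => isPrimeIdealSet_locSet_iff hS.1 hf (by rwa [h]),
    isPrimeIdealSet_locSet_iff hS.1 hf⟩

/-- Let `S ∈ Den_l(R, 0)` and `𝔭` a prime ideal of `R`.
(1) If `S⁻¹𝔭 ∩ R = 𝔭`, then `S⁻¹𝔭` is a prime ideal of `S⁻¹R` iff the left
ideal `S⁻¹𝔭` is a two-sided ideal.  (2) If `S⁻¹𝔭 ∩ R` is a prime ideal of
`R`, then `S⁻¹𝔭` is a prime ideal of `S⁻¹R` iff the left ideal `S⁻¹𝔭` is a
two-sided ideal. -/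
theorem statement15 {R Q : Type*} [Ring R] [Ring Q]
    {S : Set R} (hS : IsLeftDenominatorSet S) (hass : lAss S = ({0} : Set R))
    (f : R →+* Q) (hf : IsLeftLocalization S f)
    {p : Set R} (hp : IsPrimeIdealSet p) :
    (f ⁻¹' locSet f S p = p →
      (IsPrimeIdealSet (locSet f S p) ↔ IsIdealSet (locSet f S p))) ∧
    (IsPrimeIdealSet (f ⁻¹' locSet f S p) →
      (IsPrimeIdealSet (locSet f S p) ↔ IsIdealSet (locSet f S p))) :=
  statement15_general hS f hf hp

end BavulaMinPrimes
end

section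
/- Suppose that R is a ring, S ∈ Den_l(R, 𝔞) is a left denominator set, 𝔭 is a prime ideal of R with S ∩ 𝔭 = ∅, and the ideal σ_S⁻¹(S⁻¹𝔭) of R is finitely generated as a right R-module (e.g. R is right Noetherian). Then σ_S⁻¹(S⁻¹𝔭) = 𝔭. -/
/- Common framework: two-sided ideals, prime ideals, denominator sets and
   left localizations of (possibly noncommutative) rings, described
   axiomatically via their characteristic properties. -/

namespace BavulaMinPrimes

/-!
`σ_S⁻¹(S⁻¹𝔭)` is the `S`-saturation `{r | s r ∈ 𝔭 for some s ∈ S}`. By the left Ore condition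
finitely many of its elements have a common left denominator `t ∈ S`; applied to a finite set of
generators of the saturation as a right ideal, this gives `t · σ_S⁻¹(S⁻¹𝔭) ⊆ 𝔭`. As `t ∉ 𝔭` and
`𝔭` is prime, `σ_S⁻¹(S⁻¹𝔭) ⊆ 𝔭`.
-/

namespace IsIdealSet

variable {R : Type*} [Ring R] {I : Set R}

theorem zero_mem (hI : IsIdealSet I) : (0 : R) ∈ I := hI.1

theorem add_mem (hI : IsIdealSet I) {a b : R} (ha : a ∈ I) (hb : b ∈ I) : a + b ∈ I :=
  hI.2.1 a ha b hb

theorem neg_mem (hI : IsIdealSet I) {a : R} (ha : a ∈ I) : -a ∈ I := hI.2.2.1 a ha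

theorem mul_mem_left (hI : IsIdealSet I) (r : R) {a : R} (ha : a ∈ I) : r * a ∈ I :=
  (hI.2.2.2 a ha r).1

theorem mul_mem_right (hI : IsIdealSet I) {a : R} (ha : a ∈ I) (r : R) : a * r ∈ I :=
  (hI.2.2.2 a ha r).2

theorem sum_mem (hI : IsIdealSet I) {ι : Type*} {F : Finset ι} {v : ι → R}
    (hv : ∀ i ∈ F, v i ∈ I) : ∑ i ∈ F, v i ∈ I :=
  Finset.sum_induction v (· ∈ I) (fun _ _ => hI.add_mem) hI.zero_mem hv

end IsIdealSet

section Saturation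

variable {R : Type*} [Ring R] {S I : Set R}

def leftSaturation (S I : Set R) : Set R := { r | ∃ s ∈ S, s * r ∈ I }

theorem subset_leftSaturation (hS : IsMulSet S) : I ⊆ leftSaturation S I :=
  fun r hr => ⟨1, hS.1, by rwa [one_mul]⟩

theorem preimage_locSet_eq_leftSaturation {Q : Type*} [Ring Q] {f : R →+* Q}
    (hker : ∀ r, f r = 0 → r ∈ lAss S) (hS : IsMulSet S) (hI : IsIdealSet I) :
    f ⁻¹' locSet f S I = leftSaturation S I := by
  ext r
  constructor
  · rintro ⟨s, hs, a, ha, hsra⟩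
    obtain ⟨t, ht, hts⟩ := hker (s * r - a) (by rw [map_sub, map_mul, hsra, sub_self])
    have htsr : t * s * r = t * a := by
      rw [mul_sub, sub_eq_zero] at hts
      rwa [mul_assoc]
    exact ⟨t * s, hS.2.2 t ht s hs, htsr ▸ hI.mul_mem_left t ha⟩
  · rintro ⟨s, hs, hsr⟩
    exact ⟨s, hs, s * r, hsr, (map_mul f s r).symm⟩

theorem isIdealSet_leftSaturation (hS : IsMulSet S) (hOre : LeftOre S) (hI : IsIdealSet I) :
    IsIdealSet (leftSaturation S I) := by
  refine ⟨subset_leftSaturation hS hI.zero_mem, ?_, ?_, ?_⟩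
  · rintro a ⟨s₁, hs₁, ha⟩ b ⟨s₂, hs₂, hb⟩
    obtain ⟨s', hs', r', hr'⟩ := hOre s₁ s₂ hs₂
    refine ⟨s' * s₁, hS.2.2 s' hs' s₁ hs₁, ?_⟩
    rw [mul_add, mul_assoc, hr', mul_assoc]
    exact hI.add_mem (hI.mul_mem_left s' ha) (hI.mul_mem_left r' hb)
  · rintro a ⟨s, hs, ha⟩
    exact ⟨s, hs, by rw [mul_neg]; exact hI.neg_mem ha⟩
  · rintro a ⟨s, hs, ha⟩ r
    constructor
    · obtain ⟨s', hs', r', hr'⟩ := hOre r s hs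
      exact ⟨s', hs', by rw [← mul_assoc, hr', mul_assoc]; exact hI.mul_mem_left r' ha⟩
    · exact ⟨s, hs, by rw [← mul_assoc]; exact hI.mul_mem_right ha r⟩

theorem exists_forall_mul_mem_of_mem_leftSaturation (hS : IsMulSet S) (hOre : LeftOre S)
    (hI : IsIdealSet I) {ι : Type*} (F : Finset ι) {x : ι → R}
    (hx : ∀ i ∈ F, x i ∈ leftSaturation S I) : ∃ t ∈ S, ∀ i ∈ F, t * x i ∈ I := by
  classical
  induction F using Finset.induction_on with
  | empty => exact ⟨1, hS.1, by simp⟩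
  | insert j F _ ih =>
    obtain ⟨t, ht, htx⟩ := ih fun i hi => hx i (Finset.mem_insert_of_mem hi)
    obtain ⟨s, hs, hsx⟩ := hx j (Finset.mem_insert_self j F)
    obtain ⟨s', hs', r', hr'⟩ := hOre t s hs
    refine ⟨s' * t, hS.2.2 s' hs' t ht, ?_⟩
    rintro i hi
    rcases Finset.mem_insert.1 hi with rfl | hi
    · rw [hr', mul_assoc]; exact hI.mul_mem_left r' hsx
    · rw [mul_assoc]; exact hI.mul_mem_left s' (htx i hi)

theorem exists_forall_mul_mem_of_isFGRightIdeal (hS : IsMulSet S) (hOre : LeftOre S)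
    (hI : IsIdealSet I) (hfg : IsFGRightIdeal (leftSaturation S I)) :
    ∃ t ∈ S, ∀ b ∈ leftSaturation S I, t * b ∈ I := by
  obtain ⟨m, g, hg, hgen⟩ := hfg
  obtain ⟨t, ht, htg⟩ :=
    exists_forall_mul_mem_of_mem_leftSaturation hS hOre hI Finset.univ fun i _ => hg i
  refine ⟨t, ht, fun b hb => ?_⟩
  obtain ⟨c, rfl⟩ := hgen b hb
  rw [Finset.mul_sum]
  refine hI.sum_mem fun i hi => ?_
  rw [← mul_assoc]
  exact hI.mul_mem_right (htg i hi) (c i)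

end Saturation

/-- Primality applied to `J` and its left quotient `{x | x J ⊆ p}`, which contains `t`. -/
theorem IsPrimeIdealSet.subset_of_forall_mul_mem {R : Type*} [Ring R] {p J : Set R}
    (hp : IsPrimeIdealSet p) (hJ : IsIdealSet J) {t : R} (ht : t ∉ p)
    (htJ : ∀ b ∈ J, t * b ∈ p) : J ⊆ p := by
  have hquot : IsIdealSet { x : R | ∀ b ∈ J, x * b ∈ p } := by
    refine ⟨fun b _ => by rw [zero_mul]; exact hp.1.zero_mem, ?_, ?_, ?_⟩
    · intro x hx y hy b hb
      rw [add_mul]; exact hp.1.add_mem (hx b hb) (hy b hb)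
    · intro x hx b hb
      rw [neg_mul]; exact hp.1.neg_mem (hx b hb)
    · intro x hx r
      refine ⟨fun b hb => ?_, fun b hb => ?_⟩
      · rw [mul_assoc]; exact hp.1.mul_mem_left r (hx b hb)
      · rw [mul_assoc]; exact hx _ (hJ.mul_mem_left r hb)
  exact (hp.2.2 _ J hquot hJ fun x hx b hb => hx b hb).resolve_left fun h => ht (h htJ)

theorem statement16_general {R Q : Type*} [Ring R] [Ring Q]
    {S : Set R} (hS : IsLeftDenominatorSet S)
    (f : R →+* Q) (hf : IsLeftLocalization S f)
    {p : Set R} (hp : IsPrimeIdealSet p) (hdisj : S ∩ p = ∅)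
    (hfg : IsFGRightIdeal (f ⁻¹' locSet f S p)) :
    f ⁻¹' locSet f S p = p := by
  obtain ⟨hmul, hOre, -⟩ := hS
  rw [preimage_locSet_eq_leftSaturation (fun r => (hf.ker r).1) hmul hp.1] at hfg ⊢
  obtain ⟨t, ht, htp⟩ := exists_forall_mul_mem_of_isFGRightIdeal hmul hOre hp.1 hfg
  have ht_notMem : t ∉ p := fun h => (hdisj ▸ ⟨ht, h⟩ : t ∈ (∅ : Set R))
  exact (hp.subset_of_forall_mul_mem (isIdealSet_leftSaturation hmul hOre hp.1) ht_notMem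
    htp).antisymm (subset_leftSaturation hmul)

/-- Let `S ∈ Den_l(R, 𝔞)`, `𝔭` a prime ideal of `R` with
`S ∩ 𝔭 = ∅`, and suppose the ideal `σ_S⁻¹(S⁻¹𝔭)` of `R` is finitely
generated as a right `R`-module.  Then `σ_S⁻¹(S⁻¹𝔭) = 𝔭`. -/
theorem statement16 {R Q : Type*} [Ring R] [Ring Q]
    {S : Set R} (hS : IsLeftDenominatorSet S) {A : Set R} (hass : lAss S = A)
    (f : R →+* Q) (hf : IsLeftLocalization S f)
    {p : Set R} (hp : IsPrimeIdealSet p) (hdisj : S ∩ p = ∅)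
    (hfg : IsFGRightIdeal (f ⁻¹' locSet f S p)) :
    f ⁻¹' locSet f S p = p :=
  statement16_general hS f hf hp hdisj hfg

end BavulaMinPrimes
end

section
/- (1) Suppose R is a ring such that 𝔭₁⋯𝔭ₙ = 0 for some prime ideals 𝔭₁, …, 𝔭ₙ of R. Then every minimal prime of R belongs to the set of minimal elements (with respect to inclusion) of {𝔭₁, …, 𝔭ₙ}; in particular |min(R)| ≤ n < ∞. (2) Every ideal of a prime rich ring has only finitely many minimal primes over it. -/
/-!
If a prime `p` contains every product `x₁ ⋯ xₙ` with `xᵢ ∈ 𝔭ᵢ`, then it contains some `𝔭ᵢ`: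
the elements `b` with `𝔭₁ b ⊆ p` form an ideal whose product with `𝔭₁` lies in `p`, so either
`𝔭₁ ⊆ p` or that ideal, and with it every product `x₂ ⋯ xₙ`, lies in `p`, and one inducts on `n`.
Hence a prime minimal over an ideal `A` that contains such a product of primes over `A` is one of
the `𝔭ᵢ`, and is minimal among them. Minimal primes of `R` are the minimal primes over `0`.
-/

namespace BavulaMinPrimes

section

variable {R : Type*} [Ring R]

theorem IsIdealSet.eq_univ_of_one_mem {A : Set R} (hA : IsIdealSet A) (h1 : (1 : R) ∈ A) :
    A = Set.univ :=
  Set.eq_univ_of_forall fun r => by simpa using (hA.2.2.2 1 h1 r).1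

theorem IsPrimeIdealSet.one_notMem {p : Set R} (hp : IsPrimeIdealSet p) : (1 : R) ∉ p :=
  fun h1 => hp.2.1 (hp.1.eq_univ_of_one_mem h1)

theorem isIdealSet_setOf_forall_mul_mem {I p : Set R} (hI : IsIdealSet I) (hp : IsIdealSet p) :
    IsIdealSet {b : R | ∀ a ∈ I, a * b ∈ p} := by
  refine ⟨fun a _ => by simpa using hp.1, fun b hb c hc a ha => ?_, fun b hb a ha => ?_,
    fun b hb r => ⟨fun a ha => ?_, fun a ha => ?_⟩⟩
  · simpa [mul_add] using hp.2.1 _ (hb a ha) _ (hc a ha)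
  · simpa using hp.2.2.1 _ (hb a ha)
  · simpa [mul_assoc] using hb (a * r) (hI.2.2.2 a ha r).2
  · simpa [mul_assoc] using (hp.2.2.2 _ (hb a ha) r).2

theorem IsPrimeIdealSet.exists_subset_of_prod_mem {p : Set R} (hp : IsPrimeIdealSet p) :
    ∀ {n : ℕ} (P : Fin n → Set R), (∀ i, IsIdealSet (P i)) →
      (∀ x : Fin n → R, (∀ i, x i ∈ P i) → (List.ofFn x).prod ∈ p) → ∃ i, P i ⊆ p
  | 0, _, _, hprod => absurd (by simpa using hprod Fin.elim0 fun i => i.elim0) hp.one_notMem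
  | n + 1, P, hP, hprod => by
    have hB := isIdealSet_setOf_forall_mul_mem (hP 0) hp.1
    rcases hp.2.2 (P 0) _ (hP 0) hB fun a ha b hb => hb a ha with h0 | hB_le
    · exact ⟨0, h0⟩
    have htail : ∀ x : Fin n → R, (∀ i, x i ∈ P i.succ) → (List.ofFn x).prod ∈ p :=
      fun x hx => hB_le fun a ha => by
        simpa [List.ofFn_succ] using hprod (Fin.cons a x) (Fin.cases ha hx)
    obtain ⟨i, hi⟩ := hp.exists_subset_of_prod_mem (fun i => P i.succ) (fun i => hP i.succ) htail
    exact ⟨i.succ, hi⟩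

theorem IsMinimalPrimeOver.exists_eq_of_prod_mem {A p : Set R} (hp : IsMinimalPrimeOver A p)
    {n : ℕ} {P : Fin n → Set R} (hP : ∀ i, IsPrimeIdealSet (P i) ∧ A ⊆ P i)
    (hprod : ∀ x : Fin n → R, (∀ i, x i ∈ P i) → (List.ofFn x).prod ∈ A) :
    ∃ i, p = P i ∧ ∀ j, P j ⊆ P i → P j = P i := by
  obtain ⟨i, hi⟩ := hp.1.exists_subset_of_prod_mem P (fun i => (hP i).1.1)
    fun x hx => hp.2.1 (hprod x hx)
  have hPi : P i = p := hp.2.2 _ (hP i).1 (hP i).2 hi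
  refine ⟨i, hPi.symm, fun j hj => ?_⟩
  rw [hPi] at hj ⊢
  exact hp.2.2 _ (hP j).1 (hP j).2 hj

theorem setOf_isMinimalPrimeOver_subset_range {A : Set R} {n : ℕ} {P : Fin n → Set R}
    (hP : ∀ i, IsPrimeIdealSet (P i) ∧ A ⊆ P i)
    (hprod : ∀ x : Fin n → R, (∀ i, x i ∈ P i) → (List.ofFn x).prod ∈ A) :
    {p | IsMinimalPrimeOver A p} ⊆ Set.range P := fun _ hp =>
  let ⟨i, hi, _⟩ := IsMinimalPrimeOver.exists_eq_of_prod_mem hp hP hprod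
  ⟨i, hi.symm⟩

theorem isMinimalPrimeIdealSet_iff_isMinimalPrimeOver_zero {p : Set R} :
    IsMinimalPrimeIdealSet p ↔ IsMinimalPrimeOver {0} p := by
  have hzero : ∀ {q : Set R}, IsPrimeIdealSet q → {(0 : R)} ⊆ q :=
    fun hq => Set.singleton_subset_iff.2 hq.1.1
  exact ⟨fun hp => ⟨hp.1, hzero hp.1, fun q hq _ hqp => hp.2 q hq hqp⟩,
    fun hp => ⟨hp.1, fun q hq hqp => hp.2.2 q hq (hzero hq) hqp⟩⟩

theorem ncard_range_fin_le {α : Type*} {n : ℕ} (P : Fin n → α) : (Set.range P).ncard ≤ n := by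
  simpa [Set.image_univ] using Set.ncard_image_le (f := P) Set.finite_univ

end

/-- (1) If `𝔭₁ ⋯ 𝔭ₙ = 0` for prime ideals `𝔭₁, …, 𝔭ₙ` of
`R`, then every minimal prime of `R` is a minimal element of
`{𝔭₁, …, 𝔭ₙ}`; in particular `|min(R)| ≤ n < ∞`.  (2) Every ideal of a
prime rich ring has only finitely many minimal primes over it. -/
theorem statement17 {R : Type*} [Ring R] :
    (∀ n : ℕ, 1 ≤ n → ∀ P : Fin n → Set R, (∀ i, IsPrimeIdealSet (P i)) →
      (∀ x : Fin n → R, (∀ i, x i ∈ P i) → (List.ofFn x).prod = 0) →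
      (∀ p : Set R, IsMinimalPrimeIdealSet p →
        ∃ i, p = P i ∧ ∀ j, P j ⊆ P i → P j = P i) ∧
      (minPrimes R).Finite ∧ (minPrimes R).ncard ≤ n) ∧
    (IsPrimeRich R → ∀ A : Set R, IsIdealSet A →
      {P : Set R | IsMinimalPrimeOver A P}.Finite) := by
  refine ⟨fun n _ P hP hprod => ?_, fun hrich A hA => ?_⟩
  · have hP0 : ∀ i, IsPrimeIdealSet (P i) ∧ {(0 : R)} ⊆ P i :=
      fun i => ⟨hP i, Set.singleton_subset_iff.2 (hP i).1.1⟩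
    have hmin : ∀ p, IsMinimalPrimeIdealSet p → ∃ i, p = P i ∧ ∀ j, P j ⊆ P i → P j = P i :=
      fun p hp => (isMinimalPrimeIdealSet_iff_isMinimalPrimeOver_zero.1 hp).exists_eq_of_prod_mem
        hP0 hprod
    have hsub : minPrimes R ⊆ Set.range P := fun _ hp =>
      setOf_isMinimalPrimeOver_subset_range hP0 hprod
        (isMinimalPrimeIdealSet_iff_isMinimalPrimeOver_zero.1 hp)
    exact ⟨hmin, (Set.finite_range P).subset hsub,
      (Set.ncard_le_ncard hsub (Set.finite_range P)).trans (ncard_range_fin_le P)⟩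
  · obtain ⟨n, P, hP, hprod⟩ := hrich A hA
    exact (Set.finite_range P).subset (setOf_isMinimalPrimeOver_subset_range hP hprod)

end BavulaMinPrimes
end

section
/- Let R be a ring and S ∈ Den_l(R, 𝔞) a left denominator set. If the ring S⁻¹R is left Noetherian (e.g. R is left Noetherian), then S respects the ideal structure of R: for every ideal 𝔟 of R, the left ideal S⁻¹𝔟 of S⁻¹R is a two-sided ideal. -/
/-! `S⁻¹𝔟` is a left ideal `J` of `Q = S⁻¹R` (Ore condition), and `J f(r) ⊆ J` for all `r ∈ R`
because `𝔟` is a right ideal. As every element of `Q` is `u⁻¹ f(r)` with `u = f(s)`, `s ∈ S`,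
it remains to show `J u⁻¹ ⊆ J`. Right multiplication by `u⁻¹` is an automorphism of the left
module `Q` with `J ⊆ J u⁻¹`; the chain `J ⊆ J u⁻¹ ⊆ J u⁻² ⊆ ⋯` stabilises since `Q` is left
Noetherian, and cancelling the automorphism gives `J u⁻¹ = J`. -/

theorem OrderIso.apply_eq_of_le_apply {α : Type*} [PartialOrder α] [WellFoundedGT α]
    (g : α ≃o α) {x : α} (h : x ≤ g x) : g x = x := by
  have hmono : Monotone fun n => g^[n] x := monotone_nat_of_le_succ fun n => by
    rw [Function.iterate_succ_apply]
    exact (g.monotone.iterate n) h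
  obtain ⟨n, hn⟩ := WellFoundedGT.monotone_chain_condition ⟨_, hmono⟩
  have hstab : g^[n] x = g^[n] (g x) := by
    simpa only [OrderHom.coe_mk, Function.iterate_succ_apply] using hn (n + 1) n.le_succ
  exact ((g.injective.iterate n) hstab).symm

theorem Submodule.map_equiv_eq_of_le {R M : Type*} [Semiring R] [AddCommMonoid M] [Module R M]
    [IsNoetherian R M] (e : M ≃ₗ[R] M) {N : Submodule R M}
    (h : N ≤ N.map (e : M →ₗ[R] M)) : N.map (e : M →ₗ[R] M) = N :=
  (Submodule.orderIsoMapComap e).apply_eq_of_le_apply h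

theorem Ideal.mul_inv_mem_of_forall_mul_mem {Q : Type*} [Ring Q] [IsNoetherianRing Q]
    {J : Ideal Q} (u : Qˣ) (h : ∀ p ∈ J, p * u ∈ J) {q : Q} (hq : q ∈ J) :
    q * ↑u⁻¹ ∈ J := by
  set e : Q ≃ₗ[Q] Q := u⁻¹.mulRightLinearEquiv Q
  have hle : J ≤ Submodule.map (e : Q →ₗ[Q] Q) J := by
    intro p hp
    refine Submodule.mem_map.mpr ⟨p * u, h p hp, ?_⟩
    simp [e, mul_assoc]
  rw [← Submodule.map_equiv_eq_of_le _ hle]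
  exact Submodule.mem_map_of_mem hq

namespace BavulaMinPrimes

def IsIdealSet.toIdeal {R : Type*} [Ring R] {b : Set R} (hb : IsIdealSet b) : Ideal R where
  carrier := b
  zero_mem' := hb.1
  add_mem' ha hc := hb.2.1 _ ha _ hc
  smul_mem' r a ha := (hb.2.2.2 a ha r).1

theorem isIdealSet_of_mul_mem_right {R : Type*} [Ring R] (J : Ideal R)
    (h : ∀ a ∈ J, ∀ r : R, a * r ∈ J) : IsIdealSet (J : Set R) :=
  ⟨J.zero_mem, fun _ ha _ hb => J.add_mem ha hb, fun _ ha => J.neg_mem ha,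
    fun a ha r => ⟨J.mul_mem_left r ha, h a ha r⟩⟩

section locSet

variable {R Q : Type*} [Ring R] [Ring Q] {f : R →+* Q} {S : Set R}

theorem mul_map_mem_locSet {b : Set R} {r : R} (hb : ∀ a ∈ b, a * r ∈ b) {q : Q}
    (hq : q ∈ locSet f S b) : q * f r ∈ locSet f S b := by
  obtain ⟨s, hs, a, ha, hsq⟩ := hq
  exact ⟨s, hs, a * r, hb a ha, by rw [← mul_assoc, hsq, map_mul]⟩

variable (b : Ideal R)

theorem zero_mem_locSet (h1 : (1 : R) ∈ S) : (0 : Q) ∈ locSet f S b :=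
  ⟨1, h1, 0, b.zero_mem, by simp⟩

theorem add_mem_locSet (hS : IsMulSet S) (hOre : LeftOre S) {q₁ q₂ : Q}
    (hq₁ : q₁ ∈ locSet f S b) (hq₂ : q₂ ∈ locSet f S b) : q₁ + q₂ ∈ locSet f S b := by
  obtain ⟨s₁, hs₁, a₁, ha₁, h₁⟩ := hq₁
  obtain ⟨s₂, hs₂, a₂, ha₂, h₂⟩ := hq₂
  obtain ⟨s', hs', r', hOre'⟩ := hOre s₁ s₂ hs₂
  refine ⟨s' * s₁, hS.2.2 _ hs' _ hs₁, s' * a₁ + r' * a₂,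
    b.add_mem (b.mul_mem_left s' ha₁) (b.mul_mem_left r' ha₂), ?_⟩
  calc f (s' * s₁) * (q₁ + q₂) = f s' * (f s₁ * q₁) + f (r' * s₂) * q₂ := by
        rw [← hOre', mul_add, map_mul, mul_assoc]
    _ = f (s' * a₁ + r' * a₂) := by
        rw [h₁, map_mul, mul_assoc, h₂, map_add, map_mul, map_mul]

theorem map_mul_mem_locSet (hOre : LeftOre S) (r : R) {q : Q} (hq : q ∈ locSet f S b) :
    f r * q ∈ locSet f S b := by
  obtain ⟨s, hs, a, ha, hsq⟩ := hq
  obtain ⟨s', hs', r', hOre'⟩ := hOre r s hs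
  refine ⟨s', hs', r' * a, b.mul_mem_left r' ha, ?_⟩
  calc f s' * (f r * q) = f (r' * s) * q := by rw [← hOre', map_mul, mul_assoc]
    _ = f (r' * a) := by rw [map_mul, mul_assoc, hsq, map_mul]

/-- `x = t⁻¹ r` and a left Ore multiple `s₁ = r₁ t` give `s₁ x = r₁ r`, so no inverse is needed. -/
theorem mul_mem_locSet (hS : IsMulSet S) (hOre : LeftOre S) (hf : IsLeftLocalization S f)
    (x : Q) {q : Q} (hq : q ∈ locSet f S b) : x * q ∈ locSet f S b := by
  obtain ⟨t, ht, r, htx⟩ := hf.surj x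
  obtain ⟨s₁, hs₁, r₁, hOre₁⟩ := hOre 1 t ht
  obtain ⟨s₂, hs₂, a₂, ha₂, h₂⟩ := map_mul_mem_locSet b hOre (r₁ * r) hq
  refine ⟨s₂ * s₁, hS.2.2 _ hs₂ _ hs₁, a₂, ha₂, ?_⟩
  calc f (s₂ * s₁) * (x * q) = f s₂ * (f (r₁ * t) * x * q) := by
        rw [← hOre₁, mul_one, map_mul, mul_assoc, mul_assoc]
    _ = f a₂ := by rw [map_mul, mul_assoc (f r₁), htx, ← map_mul, h₂]

def locIdeal (hS : IsMulSet S) (hOre : LeftOre S) (hf : IsLeftLocalization S f) : Ideal Q where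
  carrier := locSet f S b
  zero_mem' := zero_mem_locSet b hS.1
  add_mem' := add_mem_locSet b hS hOre
  smul_mem' x _ := mul_mem_locSet b hS hOre hf x

end locSet

theorem statement18_general {R Q : Type*} [Ring R] [Ring Q]
    {S : Set R} (hS : IsLeftDenominatorSet S)
    (f : R →+* Q) (hf : IsLeftLocalization S f)
    [IsNoetherianRing Q] :
    ∀ b : Set R, IsIdealSet b → IsIdealSet (locSet f S b) := by
  intro b hb
  obtain ⟨hmulS, hOre, -⟩ := hS
  have hb_right : ∀ r : R, ∀ a ∈ b, a * r ∈ b := fun r a ha => (hb.2.2.2 a ha r).2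
  let J := locIdeal hb.toIdeal hmulS hOre hf
  refine isIdealSet_of_mul_mem_right J fun q hq x => ?_
  obtain ⟨t, ht, r, htx⟩ := hf.surj x
  obtain ⟨u, hut⟩ := hf.isUnit t ht
  have hx : x = ↑u⁻¹ * f r := by rw [← htx, ← hut, Units.inv_mul_cancel_left]
  have hJu : ∀ p ∈ J, p * u ∈ J := fun _ hp => hut ▸ mul_map_mem_locSet (hb_right t) hp
  have hqu : q * ↑u⁻¹ ∈ J := Ideal.mul_inv_mem_of_forall_mul_mem u hJu hq
  rw [hx, ← mul_assoc]
  exact mul_map_mem_locSet (hb_right r) hqu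

/-- Let `S ∈ Den_l(R, 𝔞)`.  If the ring `S⁻¹R` is left
Noetherian, then `S` respects the ideal structure of `R`: for every ideal
`𝔟` of `R`, the left ideal `S⁻¹𝔟` of `S⁻¹R` is a two-sided ideal. -/
theorem statement18 {R Q : Type*} [Ring R] [Ring Q]
    {S : Set R} (hS : IsLeftDenominatorSet S) {A : Set R} (hass : lAss S = A)
    (f : R →+* Q) (hf : IsLeftLocalization S f)
    [IsNoetherianRing Q] :
    ∀ b : Set R, IsIdealSet b → IsIdealSet (locSet f S b) :=
  statement18_general hS f hf

end BavulaMinPrimes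
end

section
/- Let R be a semiprime ring with finitely many minimal primes. Then the set min(R) of minimal primes of R is the only irredundant set consisting of prime ideals of R; that is, if Q is a finite set of prime ideals of R with ⋂_{𝔮 ∈ Q} 𝔮 = 0 and ⋂_{𝔮 ∈ Q∖{𝔮'}} 𝔮 ≠ 0 for every 𝔮' ∈ Q, then Q = min(R). -/
/- Common framework: two-sided ideals, prime ideals, denominator sets and
   left localizations of (possibly noncommutative) rings, described
   axiomatically via their characteristic properties. -/

namespace BavulaMinPrimes

/-! Since `⋂ Q = 0` lies in every prime `P`, primality and finiteness of `Q` give a member of `Q`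
inside `P`; hence every minimal prime belongs to `Q`. Irredundance rules out proper inclusions
between members of `Q`, so every member of `Q` is minimal. -/

section

variable {R : Type*} [Ring R]

lemma IsIdealSet.sInter {Q : Set (Set R)} (hQ : ∀ q ∈ Q, IsIdealSet q) :
    IsIdealSet (⋂₀ Q) :=
  ⟨fun q hq => (hQ q hq).1,
    fun a ha b hb q hq => (hQ q hq).2.1 a (ha q hq) b (hb q hq),
    fun a ha q hq => (hQ q hq).2.2.1 a (ha q hq),
    fun a ha r => ⟨fun q hq => ((hQ q hq).2.2.2 a (ha q hq) r).1,
      fun q hq => ((hQ q hq).2.2.2 a (ha q hq) r).2⟩⟩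

lemma IsPrimeIdealSet.exists_subset_of_sInter_subset {P : Set R} (hP : IsPrimeIdealSet P)
    {Q : Set (Set R)} (hQfin : Q.Finite) (hQ : ∀ q ∈ Q, IsIdealSet q) (hsub : ⋂₀ Q ⊆ P) :
    ∃ q ∈ Q, q ⊆ P := by
  induction Q, hQfin using Set.Finite.induction_on with
  | empty => exact absurd (Set.univ_subset_iff.mp (by simpa using hsub)) hP.2.1
  | @insert a s _ _ ih =>
    have ha : IsIdealSet a := hQ a (Set.mem_insert _ _)
    have hs : ∀ q ∈ s, IsIdealSet q := fun q hq => hQ q (Set.mem_insert_of_mem _ hq)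
    have hprod : ∀ x ∈ a, ∀ y ∈ ⋂₀ s, x * y ∈ P := fun x hx y hy =>
      hsub <| Set.sInter_insert a s ▸
        ⟨(ha.2.2.2 x hx y).2, (IsIdealSet.sInter hs).2.2.2 y hy x |>.1⟩
    rcases hP.2.2 a _ ha (IsIdealSet.sInter hs) hprod with haP | hsP
    · exact ⟨a, Set.mem_insert _ _, haP⟩
    · obtain ⟨q, hq, hqP⟩ := ih hs hsP
      exact ⟨q, Set.mem_insert_of_mem _ hq, hqP⟩

lemma eq_of_subset_of_irredundant {Q : Set (Set R)} (hzero : ⋂₀ Q ⊆ {0})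
    (hirr : ∀ q' ∈ Q, ∃ r : R, r ≠ 0 ∧ ∀ q ∈ Q, q ≠ q' → r ∈ q)
    {q q' : Set R} (hq : q ∈ Q) (hq' : q' ∈ Q) (hsub : q' ⊆ q) : q' = q := by
  by_contra hne
  obtain ⟨r, hr0, hr⟩ := hirr q hq
  have hrQ : r ∈ ⋂₀ Q := fun p hp => by
    by_cases hpq : p = q
    · exact hpq ▸ hsub (hr q' hq' hne)
    · exact hr p hp hpq
  exact hr0 (hzero hrQ)

end

theorem statement19_general {R : Type*} [Ring R]
    (Qs : Set (Set R)) (hQfin : Qs.Finite)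
    (hprime : ∀ q ∈ Qs, IsPrimeIdealSet q)
    (hzero : {r : R | ∀ q ∈ Qs, r ∈ q} = {0})
    (hirr : ∀ q' ∈ Qs, ∃ r : R, r ≠ 0 ∧ ∀ q ∈ Qs, q ≠ q' → r ∈ q) :
    Qs = minPrimes R := by
  have hzero' : ⋂₀ Qs = {0} := hzero
  have hcover : ∀ P, IsPrimeIdealSet P → ∃ q ∈ Qs, q ⊆ P := fun P hP =>
    hP.exists_subset_of_sInter_subset hQfin (fun q hq => (hprime q hq).1)
      (hzero' ▸ Set.singleton_subset_iff.mpr hP.1.1)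
  refine Set.Subset.antisymm (fun q hq => ⟨hprime q hq, fun P hP hPq => ?_⟩) (fun P hP => ?_)
  · obtain ⟨q', hq', hq'P⟩ := hcover P hP
    have hq'q : q' = q := eq_of_subset_of_irredundant hzero'.subset hirr hq hq' (hq'P.trans hPq)
    exact hPq.antisymm (hq'q ▸ hq'P)
  · obtain ⟨q, hq, hqP⟩ := hcover P hP.1
    rwa [← hP.2 q (hprime q hq) hqP]

/-- Let `R` be a semiprime ring with finitely many minimal
primes.  Then `min(R)` is the only irredundant set of prime ideals of `R`:
if `Qs` is a finite set of prime ideals with `⋂_{𝔮 ∈ Qs} 𝔮 = 0` and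
`⋂_{𝔮 ∈ Qs ∖ {𝔮'}} 𝔮 ≠ 0` for every `𝔮' ∈ Qs`, then `Qs = min(R)`. -/
theorem statement19 {R : Type*} [Ring R]
    (hR : IsSemiprimeRing R) (hfin : (minPrimes R).Finite)
    (Qs : Set (Set R)) (hQfin : Qs.Finite)
    (hprime : ∀ q ∈ Qs, IsPrimeIdealSet q)
    (hzero : {r : R | ∀ q ∈ Qs, r ∈ q} = {0})
    (hirr : ∀ q' ∈ Qs, ∃ r : R, r ≠ 0 ∧ ∀ q ∈ Qs, q ≠ q' → r ∈ q) :
    Qs = minPrimes R :=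
  statement19_general Qs hQfin hprime hzero hirr

end BavulaMinPrimes
end
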